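/- Let V be a ℚ-algebra, let M be a left V-module, and let π₀, π₁, …, πₙ be idempotents in V such that (πⱼ·πᵢ)·m = 0 for all m ∈ M whenever i ≠ j. For each i define pᵢ := (1 − ½πₙ)⋯(1 − ½π₍ᵢ₊₁₎) · πᵢ · (1 − ½π₍ᵢ₋₁₎)⋯(1 − ½π₀). Then pᵢ·m = πᵢ·m for all m ∈ M and all i; that is, each pᵢ and πᵢ induce the same endomorphism of M. -/

import Mathlib

/-!
Modulo the annihilator of `M` the cross products `πⱼπᵢ` vanish, so `πᵢ` absorbs every factor
`1 - ½πⱼ` with `j ≠ i`, on either side: `πᵢ(1 - ½πⱼ) = πᵢ - ½πᵢπⱼ ≡ πᵢ`. Peeling off the factors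
of `pᵢ` one at a time leaves `πᵢ`. The computation is done in the image of `V` under the ring
homomorphism `V → End M`, where "acting trivially" becomes "equal to zero".
-/

/-- One step of the non-commutative Gram–Schmidt process:
`gs n π i = (1 − ½πₙ)⋯(1 − ½π₍ᵢ₊₁₎) · πᵢ · (1 − ½π₍ᵢ₋₁₎)⋯(1 − ½π₀)`,
where the factors in each product are taken with decreasing index from left to right. -/
def gs {V : Type*} [Ring V] [Algebra ℚ V] (n : ℕ) (π : ℕ → V) (i : ℕ) : V :=
  (((List.range (n - i)).map (fun k => (1 : V) - ((2 : ℚ)⁻¹) • π (n - k))).prod)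
    * π i *
  (((List.range i).map (fun k => (1 : V) - ((2 : ℚ)⁻¹) • π (i - 1 - k))).prod)

section Monoid

variable {α : Type*} [Monoid α] {a : α} {l : List α}

theorem mul_list_prod_eq_self (h : ∀ x ∈ l, a * x = a) : a * l.prod = a :=
  l.prod_induction (a * · = a) (fun x y hx hy => by rw [← mul_assoc, hx, hy]) (mul_one a) h

theorem list_prod_mul_eq_self (h : ∀ x ∈ l, x * a = a) : l.prod * a = a :=
  l.prod_induction (· * a = a) (fun x y hx hy => by rw [mul_assoc, hy, hx]) (one_mul a) h

end Monoid

section RingHom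

variable {R V S : Type*} [CommSemiring R] [Ring V] [Algebra R V] [Ring S] (φ : V →+* S)
  {a b : V}

theorem RingHom.map_mul_one_sub_smul (h : φ (a * b) = 0) (r : R) :
    φ a * φ (1 - r • b) = φ a := by
  rw [← map_mul, mul_sub, mul_one, mul_smul_comm, Algebra.smul_def, map_sub, map_mul, h,
    mul_zero, sub_zero]

theorem RingHom.map_one_sub_smul_mul (h : φ (b * a) = 0) (r : R) :
    φ (1 - r • b) * φ a = φ a := by
  rw [← map_mul, sub_mul, one_mul, smul_mul_assoc, Algebra.smul_def, map_sub, map_mul, h,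
    mul_zero, sub_zero]

end RingHom

theorem RingHom.map_gs {V S : Type*} [Ring V] [Algebra ℚ V] [Ring S] (φ : V →+* S) (n : ℕ)
    (π : ℕ → V) (hcross : ∀ i j, i ≤ n → j ≤ n → i ≠ j → φ (π j * π i) = 0) {i : ℕ}
    (hi : i ≤ n) : φ (gs n π i) = φ (π i) := by
  have left : ∀ k ∈ List.range (n - i), φ (1 - (2 : ℚ)⁻¹ • π (n - k)) * φ (π i) = φ (π i) :=
    fun k hk => φ.map_one_sub_smul_mul (hcross _ _ hi (Nat.sub_le n k) (by grind)) _
  have right : ∀ k ∈ List.range i, φ (π i) * φ (1 - (2 : ℚ)⁻¹ • π (i - 1 - k)) = φ (π i) :=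
    fun k hk => φ.map_mul_one_sub_smul (hcross _ _ (by grind) hi (by grind)) _
  rw [gs, map_mul, map_mul, map_list_prod, map_list_prod, List.map_map, List.map_map,
    list_prod_mul_eq_self (by simpa using left), mul_list_prod_eq_self (by simpa using right)]

theorem stmt_4 {V : Type*} [Ring V] [Algebra ℚ V]
    (M : Type*) [AddCommGroup M] [Module V M] (n : ℕ) (π : ℕ → V)
    (hact : ∀ i j, i ≤ n → j ≤ n → i ≠ j → ∀ m : M, (π j * π i) • m = 0) :
    ∀ i, i ≤ n → ∀ m : M, gs n π i • m = π i • m := fun _ hi =>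
  DFunLike.congr_fun <| (Module.toAddMonoidEnd V M).map_gs n π
    (fun _ _ hi hj hij => AddMonoidHom.ext (hact _ _ hi hj hij)) hi
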